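/- Let ζ = (ζ₁,ζ₂,ζ₃) ∈ {−1,0,1}³ with ζ ≠ (0,0,0) and λ₁, λ₂, λ₃ > 0, with f and ∇ as in the context. Then f is a strictly nearly Kähler f-structure, i.e., (∇_{fX} f)(fX) = 0 for all X ∈ m but not ((∇_X f)(Y) = 0 for all X, Y ∈ m), if and only if one of the following holds: (ζ₁,ζ₂,ζ₃) = ±(1,1,1) and λ₁ = λ₂ = λ₃; (ζ₁,ζ₂,ζ₃) = ±(1,1,0) and λ₁ = λ₂; (ζ₁,ζ₂,ζ₃) = ±(1,0,1) and λ₁ = λ₃; (ζ₁,ζ₂,ζ₃) = ±(0,1,1) and λ₂ = λ₃; or (ζ₁,ζ₂,ζ₃) ∈ {±(1,0,0), ±(0,1,0), ±(0,0,1)} with λ₁, λ₂, λ₃ arbitrary. -/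

import Mathlib

open ComplexConjugate Matrix

noncomputable section

/-- The matrix D(a,b,c) ∈ su(3): zero diagonal, X₁₂ = a, X₂₁ = −conj a,
X₂₃ = b, X₃₂ = −conj b, X₁₃ = conj c, X₃₁ = −c. -/
def Dm (a b c : ℂ) : Matrix (Fin 3) (Fin 3) ℂ :=
  !![0, a, conj c; -conj a, 0, b; -c, -conj b, 0]

/-- The real Lie algebra su(3) of traceless skew-Hermitian 3×3 complex
matrices (as a set of matrices, with bracket [X,Y] = XY − YX). -/
def su3 : Set (Matrix (Fin 3) (Fin 3) ℂ) :=
  {X | Xᴴ = -X ∧ X.trace = 0}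

/-- h: the diagonal matrices in su(3). -/
def hSet : Set (Matrix (Fin 3) (Fin 3) ℂ) :=
  {X | X ∈ su3 ∧ ∀ i j, i ≠ j → X i j = 0}

/-- m = {D(a,b,c)}. -/
def mSet : Set (Matrix (Fin 3) (Fin 3) ℂ) :=
  {X | ∃ a b c : ℂ, X = Dm a b c}

/-- The three components m₁, m₂, m₃ of m. -/
def mComp : Fin 3 → Set (Matrix (Fin 3) (Fin 3) ℂ) :=
  ![{X | ∃ a : ℂ, X = Dm a 0 0}, {X | ∃ b : ℂ, X = Dm 0 b 0},
    {X | ∃ c : ℂ, X = Dm 0 0 c}]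

/-- ⟨X,Y⟩₀ = −½ Re tr(XY). -/
def inner0 (X Y : Matrix (Fin 3) (Fin 3) ℂ) : ℝ :=
  -(1 / 2) * ((X * Y).trace).re

end

noncomputable section

/-- The m-component of a matrix in su(3) = h ⊕ m (h the diagonal part):
zero out the diagonal. -/
def projm (Z : Matrix (Fin 3) (Fin 3) ℂ) : Matrix (Fin 3) (Fin 3) ℂ :=
  Z - Matrix.diagonal fun i => Z i i

/-- Projections of m onto its components m₁, m₂, m₃. -/
def mProj : Fin 3 → (Matrix (Fin 3) (Fin 3) ℂ → Matrix (Fin 3) (Fin 3) ℂ) :=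
  ![fun X => Dm (X 0 1) 0 0, fun X => Dm 0 (X 1 2) 0, fun X => Dm 0 0 (-(X 2 0))]

/-- The invariant metric g = (λ₁,λ₂,λ₃): g(X,Y) = Σ_j λ_j ⟨X_j, Y_j⟩₀ for
X, Y ∈ m, where X_j is the m_j-component; m₁, m₂, m₃ are mutually
orthogonal. -/
def gmet (lam : Fin 3 → ℝ) (X Y : Matrix (Fin 3) (Fin 3) ℂ) : ℝ :=
  ∑ j : Fin 3, lam j * inner0 (mProj j X) (mProj j Y)

end

noncomputable section

/-- The invariant f-structure with characteristic collection (ζ₁,ζ₂,ζ₃):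
f(D(a,b,c)) = D(ζ₁ia, ζ₂ib, ζ₃ic). -/
def fm (z : Fin 3 → ℝ) (X : Matrix (Fin 3) (Fin 3) ℂ) :
    Matrix (Fin 3) (Fin 3) ℂ :=
  Dm ((z 0 : ℂ) * Complex.I * X 0 1) ((z 1 : ℂ) * Complex.I * X 1 2)
    ((z 2 : ℂ) * Complex.I * (-(X 2 0)))

/-- The Nomizu function α(X,Y) = ½[X,Y]_m + U(X,Y) of the Levi-Civita
connection. -/
def alphaU (U : Matrix (Fin 3) (Fin 3) ℂ → Matrix (Fin 3) (Fin 3) ℂ →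
      Matrix (Fin 3) (Fin 3) ℂ)
    (X Y : Matrix (Fin 3) (Fin 3) ℂ) : Matrix (Fin 3) (Fin 3) ℂ :=
  (1 / 2 : ℝ) • projm ⁅X, Y⁆ + U X Y

/-- The covariant derivative (∇_X f)(Y) = α(X, fY) − f(α(X,Y)). -/
def nablaU (U : Matrix (Fin 3) (Fin 3) ℂ → Matrix (Fin 3) (Fin 3) ℂ →
      Matrix (Fin 3) (Fin 3) ℂ)
    (z : Fin 3 → ℝ) (X Y : Matrix (Fin 3) (Fin 3) ℂ) :
    Matrix (Fin 3) (Fin 3) ℂ :=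
  alphaU U X (fm z Y) - fm z (alphaU U X Y)

/-- The composition tensor T(X,Y) = ¼ f((∇_{fX} f)(fY) − (∇_{f²X} f)(f²Y)). -/
def TU (U : Matrix (Fin 3) (Fin 3) ℂ → Matrix (Fin 3) (Fin 3) ℂ →
      Matrix (Fin 3) (Fin 3) ℂ)
    (z : Fin 3 → ℝ) (X Y : Matrix (Fin 3) (Fin 3) ℂ) :
    Matrix (Fin 3) (Fin 3) ℂ :=
  (1 / 4 : ℝ) • fm z (nablaU U z (fm z X) (fm z Y) -
    nablaU U z (fm z (fm z X)) (fm z (fm z Y)))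

end

/-!
Since `g` is nondegenerate on `m`, the Koszul formula determines `U` on `m` explicitly
(`koszulDm`). Substituting it into `α`, every component of `(∇_X f)(Y)` is a combination of the
three real numbers `s_k = (λ_i + λ_j - λ_k)(ζ_i + ζ_j)`, `{i, j, k} = {1, 2, 3}`
(`kahlerDefect`). Testing on `X = Y = D(1,1,1)` and on pairs of coordinate vectors shows that `f`
is nearly Kähler iff `ζ_i ζ_j (s_i - s_j) = 0` for all `i, j`, and Kähler iff all `s_k` vanish.
For `ζ ∈ {-1,0,1}³` these are linear conditions on `λ`, so the classification is a finite check.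
-/

section Coordinates

lemma Dm_mem_mSet (a b c : ℂ) : Dm a b c ∈ mSet := ⟨a, b, c, rfl⟩

lemma Dm_eq_zero_iff {a b c : ℂ} : Dm a b c = 0 ↔ a = 0 ∧ b = 0 ∧ c = 0 := by
  refine ⟨fun h => ⟨?_, ?_, ?_⟩, ?_⟩
  · simpa [Dm] using congrFun (congrFun h 0) 1
  · simpa [Dm] using congrFun (congrFun h 1) 2
  · simpa [Dm] using congrFun (congrFun h 2) 0
  · rintro ⟨rfl, rfl, rfl⟩
    ext i j
    fin_cases i <;> fin_cases j <;> simp [Dm]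

lemma Dm_add (a b c a' b' c' : ℂ) :
    Dm a b c + Dm a' b' c' = Dm (a + a') (b + b') (c + c') := by
  ext i j; fin_cases i <;> fin_cases j <;> simp [Dm] <;> ring

lemma Dm_sub (a b c a' b' c' : ℂ) :
    Dm a b c - Dm a' b' c' = Dm (a - a') (b - b') (c - c') := by
  ext i j; fin_cases i <;> fin_cases j <;> simp [Dm] <;> ring

lemma real_smul_Dm (r : ℝ) (a b c : ℂ) : r • Dm a b c = Dm (r * a) (r * b) (r * c) := by
  ext i j; fin_cases i <;> fin_cases j <;> simp [Dm, Complex.real_smul]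

lemma fm_Dm (z : Fin 3 → ℝ) (a b c : ℂ) :
    fm z (Dm a b c) = Dm (z 0 * Complex.I * a) (z 1 * Complex.I * b) (z 2 * Complex.I * c) := by
  simp [fm, Dm]

lemma projm_lie_Dm (a b c a' b' c' : ℂ) :
    projm ⁅Dm a b c, Dm a' b' c'⁆ =
      Dm (conj (b * c' - b' * c)) (conj (c * a' - c' * a)) (conj (a * b' - a' * b)) := by
  ext i j
  fin_cases i <;> fin_cases j <;> simp [projm, Dm, Ring.lie_def] <;> ring

lemma inner0_Dm (a b c a' b' c' : ℂ) :
    inner0 (Dm a b c) (Dm a' b' c') = (a * conj a' + b * conj b' + c * conj c').re := by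
  simp [inner0, Dm, Matrix.trace_fin_three]
  ring

lemma gmet_Dm (lam : Fin 3 → ℝ) (a b c a' b' c' : ℂ) :
    gmet lam (Dm a b c) (Dm a' b' c') =
      lam 0 * (a * conj a').re + lam 1 * (b * conj b').re + lam 2 * (c * conj c').re := by
  simp only [gmet, Fin.sum_univ_three, mProj, Matrix.cons_val_zero, Matrix.cons_val_one,
    Matrix.cons_val_two, Matrix.head_cons, Matrix.tail_cons, inner0_Dm]
  simp [Dm]

end Coordinates

section Metric

variable {lam : Fin 3 → ℝ}

lemma gmet_Dm_sub_left (a b c a' b' c' p q r : ℂ) :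
    gmet lam (Dm a b c) (Dm p q r) - gmet lam (Dm a' b' c') (Dm p q r) =
      gmet lam (Dm (a - a') (b - b') (c - c')) (Dm p q r) := by
  simp only [gmet_Dm, sub_mul, Complex.sub_re]
  ring

lemma gmet_Dm_self (a b c : ℂ) :
    gmet lam (Dm a b c) (Dm a b c) =
      lam 0 * Complex.normSq a + lam 1 * Complex.normSq b + lam 2 * Complex.normSq c := by
  simp only [gmet_Dm, Complex.mul_conj, Complex.ofReal_re]

lemma eq_of_forall_gmet_eq (hlam : ∀ j, 0 < lam j) {X Y : Matrix (Fin 3) (Fin 3) ℂ}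
    (hX : X ∈ mSet) (hY : Y ∈ mSet) (h : ∀ Z ∈ mSet, gmet lam X Z = gmet lam Y Z) : X = Y := by
  obtain ⟨a, b, c, rfl⟩ := hX
  obtain ⟨a', b', c', rfl⟩ := hY
  have hzero := h _ (Dm_mem_mSet (a - a') (b - b') (c - c'))
  rw [← sub_eq_zero, gmet_Dm_sub_left, gmet_Dm_self] at hzero
  have := hlam 0; have := hlam 1; have := hlam 2
  have := Complex.normSq_nonneg (a - a')
  have := Complex.normSq_nonneg (b - b')
  have := Complex.normSq_nonneg (c - c')
  rw [← sub_eq_zero, Dm_sub, Dm_eq_zero_iff]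
  simp only [← Complex.normSq_eq_zero]
  refine ⟨?_, ?_, ?_⟩ <;> nlinarith

noncomputable def koszulDm (lam : Fin 3 → ℝ) (a b c a' b' c' : ℂ) : Matrix (Fin 3) (Fin 3) ℂ :=
  Dm (((lam 2 - lam 1) / (2 * lam 0) : ℝ) * conj (b * c' + b' * c))
    (((lam 0 - lam 2) / (2 * lam 1) : ℝ) * conj (c * a' + c' * a))
    (((lam 1 - lam 0) / (2 * lam 2) : ℝ) * conj (a * b' + a' * b))

lemma two_mul_gmet_koszulDm (hlam : ∀ j, lam j ≠ 0) (a b c a' b' c' p q r : ℂ) :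
    2 * gmet lam (koszulDm lam a b c a' b' c') (Dm p q r) =
      gmet lam (Dm a b c) (projm ⁅Dm p q r, Dm a' b' c'⁆) +
        gmet lam (projm ⁅Dm p q r, Dm a b c⁆) (Dm a' b' c') := by
  have := hlam 0; have := hlam 1; have := hlam 2
  simp only [koszulDm, projm_lie_Dm, gmet_Dm, Complex.mul_re, Complex.mul_im, Complex.conj_re,
    Complex.conj_im, Complex.ofReal_re, Complex.ofReal_im, Complex.add_re, Complex.add_im,
    Complex.sub_re, Complex.sub_im]
  field_simp
  ring

lemma U_Dm_eq_koszulDm (hlam : ∀ j, 0 < lam j)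
    {U : Matrix (Fin 3) (Fin 3) ℂ → Matrix (Fin 3) (Fin 3) ℂ → Matrix (Fin 3) (Fin 3) ℂ}
    (hUmem : ∀ X ∈ mSet, ∀ Y ∈ mSet, U X Y ∈ mSet)
    (hUdef : ∀ X ∈ mSet, ∀ Y ∈ mSet, ∀ Z ∈ mSet,
      2 * gmet lam (U X Y) Z = gmet lam X (projm ⁅Z, Y⁆) + gmet lam (projm ⁅Z, X⁆) Y)
    (a b c a' b' c' : ℂ) :
    U (Dm a b c) (Dm a' b' c') = koszulDm lam a b c a' b' c' := by
  refine eq_of_forall_gmet_eq hlam (hUmem _ (Dm_mem_mSet a b c) _ (Dm_mem_mSet a' b' c'))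
    (Dm_mem_mSet _ _ _) ?_
  rintro Z ⟨p, q, r, rfl⟩
  have hU := hUdef _ (Dm_mem_mSet a b c) _ (Dm_mem_mSet a' b' c') _ (Dm_mem_mSet p q r)
  have hK := two_mul_gmet_koszulDm (fun j => (hlam j).ne') a b c a' b' c' p q r
  linarith

end Metric

section Covariant

variable {lam z : Fin 3 → ℝ}
  {U : Matrix (Fin 3) (Fin 3) ℂ → Matrix (Fin 3) (Fin 3) ℂ → Matrix (Fin 3) (Fin 3) ℂ}

def kahlerDefect (lam z : Fin 3 → ℝ) (i j k : Fin 3) : ℝ :=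
  (lam i + lam j - lam k) * (z i + z j)

lemma nablaU_Dm (hlam : ∀ j, lam j ≠ 0)
    (hU : ∀ a b c a' b' c', U (Dm a b c) (Dm a' b' c') = koszulDm lam a b c a' b' c')
    (a b c a' b' c' : ℂ) :
    nablaU U z (Dm a b c) (Dm a' b' c') =
      Dm (-Complex.I / (2 * lam 0) *
          (kahlerDefect lam z 2 0 1 * conj (b * c') - kahlerDefect lam z 0 1 2 * conj (b' * c)))
        (-Complex.I / (2 * lam 1) *
          (kahlerDefect lam z 0 1 2 * conj (c * a') - kahlerDefect lam z 1 2 0 * conj (c' * a)))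
        (-Complex.I / (2 * lam 2) *
          (kahlerDefect lam z 1 2 0 * conj (a * b') -
            kahlerDefect lam z 2 0 1 * conj (a' * b))) := by
  have h0 : (lam 0 : ℂ) ≠ 0 := Complex.ofReal_ne_zero.mpr (hlam 0)
  have h1 : (lam 1 : ℂ) ≠ 0 := Complex.ofReal_ne_zero.mpr (hlam 1)
  have h2 : (lam 2 : ℂ) ≠ 0 := Complex.ofReal_ne_zero.mpr (hlam 2)
  rw [nablaU, alphaU, alphaU, fm_Dm, hU, hU, koszulDm, koszulDm, projm_lie_Dm, projm_lie_Dm,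
    real_smul_Dm, real_smul_Dm, Dm_add, Dm_add, fm_Dm, Dm_sub]
  congr 1 <;>
  · simp only [kahlerDefect, _root_.map_mul, _root_.map_add, _root_.map_sub, Complex.conj_I,
      Complex.conj_ofReal, Complex.ofReal_div, Complex.ofReal_mul, Complex.ofReal_add,
      Complex.ofReal_sub, Complex.ofReal_ofNat, Complex.ofReal_one]
    field_simp
    ring

lemma nablaU_fm_Dm_fm_Dm (hlam : ∀ j, lam j ≠ 0)
    (hU : ∀ a b c a' b' c', U (Dm a b c) (Dm a' b' c') = koszulDm lam a b c a' b' c')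
    (a b c : ℂ) :
    nablaU U z (fm z (Dm a b c)) (fm z (Dm a b c)) =
      Dm (Complex.I / (2 * lam 0) *
          ((z 1 * z 2 * (kahlerDefect lam z 2 0 1 - kahlerDefect lam z 0 1 2) : ℝ) * conj (b * c)))
        (Complex.I / (2 * lam 1) *
          ((z 2 * z 0 * (kahlerDefect lam z 0 1 2 - kahlerDefect lam z 1 2 0) : ℝ) * conj (c * a)))
        (Complex.I / (2 * lam 2) *
          ((z 0 * z 1 * (kahlerDefect lam z 1 2 0 - kahlerDefect lam z 2 0 1) : ℝ) *
            conj (a * b))) := by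
  rw [fm_Dm, nablaU_Dm hlam hU]
  congr 1 <;>
  · simp only [_root_.map_mul, Complex.conj_I, Complex.conj_ofReal, Complex.ofReal_mul,
      Complex.ofReal_sub]
    ring_nf
    rw [Complex.I_pow_three]
    ring

def IsNearlyKahler (U : Matrix (Fin 3) (Fin 3) ℂ → Matrix (Fin 3) (Fin 3) ℂ →
      Matrix (Fin 3) (Fin 3) ℂ) (z : Fin 3 → ℝ) : Prop :=
  ∀ X ∈ mSet, nablaU U z (fm z X) (fm z X) = 0

def IsKahler (U : Matrix (Fin 3) (Fin 3) ℂ → Matrix (Fin 3) (Fin 3) ℂ →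
      Matrix (Fin 3) (Fin 3) ℂ) (z : Fin 3 → ℝ) : Prop :=
  ∀ X ∈ mSet, ∀ Y ∈ mSet, nablaU U z X Y = 0

lemma isNearlyKahler_iff (hlam : ∀ j, lam j ≠ 0)
    (hU : ∀ a b c a' b' c', U (Dm a b c) (Dm a' b' c') = koszulDm lam a b c a' b' c') :
    IsNearlyKahler U z ↔
      z 1 * z 2 * (kahlerDefect lam z 2 0 1 - kahlerDefect lam z 0 1 2) = 0 ∧
      z 2 * z 0 * (kahlerDefect lam z 0 1 2 - kahlerDefect lam z 1 2 0) = 0 ∧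
      z 0 * z 1 * (kahlerDefect lam z 1 2 0 - kahlerDefect lam z 2 0 1) = 0 := by
  constructor
  · intro h
    have h111 := h _ (Dm_mem_mSet 1 1 1)
    simpa [nablaU_fm_Dm_fm_Dm hlam hU, Dm_eq_zero_iff, hlam, sub_eq_zero] using h111
  · rintro ⟨h0, h1, h2⟩ X ⟨a, b, c, rfl⟩
    simp [nablaU_fm_Dm_fm_Dm hlam hU, Dm_eq_zero_iff, h0, h1, h2]

lemma isKahler_iff (hlam : ∀ j, lam j ≠ 0)
    (hU : ∀ a b c a' b' c', U (Dm a b c) (Dm a' b' c') = koszulDm lam a b c a' b' c') :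
    IsKahler U z ↔
      kahlerDefect lam z 1 2 0 = 0 ∧ kahlerDefect lam z 2 0 1 = 0 ∧
        kahlerDefect lam z 0 1 2 = 0 := by
  constructor
  · intro h
    have h12 := h _ (Dm_mem_mSet 1 0 0) _ (Dm_mem_mSet 0 1 0)
    have h20 := h _ (Dm_mem_mSet 0 1 0) _ (Dm_mem_mSet 0 0 1)
    have h01 := h _ (Dm_mem_mSet 0 0 1) _ (Dm_mem_mSet 1 0 0)
    simp only [nablaU_Dm hlam hU, Dm_eq_zero_iff] at h12 h20 h01
    simp_all
  · rintro ⟨h0, h1, h2⟩ X ⟨a, b, c, rfl⟩ Y ⟨a', b', c', rfl⟩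
    simp [nablaU_Dm hlam hU, Dm_eq_zero_iff, h0, h1, h2]

end Covariant

lemma kahlerDefect_conditions_iff {lam z : Fin 3 → ℝ} (hlam : ∀ j, 0 < lam j)
    (hz : ∀ j, z j = -1 ∨ z j = 0 ∨ z j = 1) :
    ((z 1 * z 2 * (kahlerDefect lam z 2 0 1 - kahlerDefect lam z 0 1 2) = 0 ∧
      z 2 * z 0 * (kahlerDefect lam z 0 1 2 - kahlerDefect lam z 1 2 0) = 0 ∧
      z 0 * z 1 * (kahlerDefect lam z 1 2 0 - kahlerDefect lam z 2 0 1) = 0) ∧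
    ¬(kahlerDefect lam z 1 2 0 = 0 ∧ kahlerDefect lam z 2 0 1 = 0 ∧
        kahlerDefect lam z 0 1 2 = 0)) ↔
      ((((z 0 = 1 ∧ z 1 = 1 ∧ z 2 = 1) ∨ (z 0 = -1 ∧ z 1 = -1 ∧ z 2 = -1)) ∧
          lam 0 = lam 1 ∧ lam 1 = lam 2) ∨
      ((((z 0 = 1 ∧ z 1 = 1 ∧ z 2 = 0) ∨ (z 0 = -1 ∧ z 1 = -1 ∧ z 2 = 0)) ∧
          lam 0 = lam 1)) ∨
      ((((z 0 = 1 ∧ z 1 = 0 ∧ z 2 = 1) ∨ (z 0 = -1 ∧ z 1 = 0 ∧ z 2 = -1)) ∧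
          lam 0 = lam 2)) ∨
      ((((z 0 = 0 ∧ z 1 = 1 ∧ z 2 = 1) ∨ (z 0 = 0 ∧ z 1 = -1 ∧ z 2 = -1)) ∧
          lam 1 = lam 2)) ∨
      ((z 0 = 1 ∧ z 1 = 0 ∧ z 2 = 0) ∨ (z 0 = -1 ∧ z 1 = 0 ∧ z 2 = 0) ∨
        (z 0 = 0 ∧ z 1 = 1 ∧ z 2 = 0) ∨ (z 0 = 0 ∧ z 1 = -1 ∧ z 2 = 0) ∨
        (z 0 = 0 ∧ z 1 = 0 ∧ z 2 = 1) ∨ (z 0 = 0 ∧ z 1 = 0 ∧ z 2 = -1))) := by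
  have := hlam 0; have := hlam 1; have := hlam 2
  simp only [kahlerDefect]
  rcases hz 0 with h0 | h0 | h0 <;> rcases hz 1 with h1 | h1 | h1 <;>
    rcases hz 2 with h2 | h2 | h2 <;> simp only [h0, h1, h2]
  all_goals norm_num <;> grind

theorem stmt_12_general (z : Fin 3 → ℝ) (hz : ∀ j, z j = -1 ∨ z j = 0 ∨ z j = 1)
    (lam : Fin 3 → ℝ) (hlam : ∀ j, 0 < lam j)
    (U : Matrix (Fin 3) (Fin 3) ℂ → Matrix (Fin 3) (Fin 3) ℂ →
      Matrix (Fin 3) (Fin 3) ℂ)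
    (hUmem : ∀ X ∈ mSet, ∀ Y ∈ mSet, U X Y ∈ mSet)
    (hUdef : ∀ X ∈ mSet, ∀ Y ∈ mSet, ∀ Z ∈ mSet,
      2 * gmet lam (U X Y) Z =
        gmet lam X (projm ⁅Z, Y⁆) + gmet lam (projm ⁅Z, X⁆) Y) :
    ((∀ X ∈ mSet, nablaU U z (fm z X) (fm z X) = 0) ∧
        ¬(∀ X ∈ mSet, ∀ Y ∈ mSet, nablaU U z X Y = 0)) ↔
      ((((z 0 = 1 ∧ z 1 = 1 ∧ z 2 = 1) ∨ (z 0 = -1 ∧ z 1 = -1 ∧ z 2 = -1)) ∧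
          lam 0 = lam 1 ∧ lam 1 = lam 2) ∨
      ((((z 0 = 1 ∧ z 1 = 1 ∧ z 2 = 0) ∨ (z 0 = -1 ∧ z 1 = -1 ∧ z 2 = 0)) ∧
          lam 0 = lam 1)) ∨
      ((((z 0 = 1 ∧ z 1 = 0 ∧ z 2 = 1) ∨ (z 0 = -1 ∧ z 1 = 0 ∧ z 2 = -1)) ∧
          lam 0 = lam 2)) ∨
      ((((z 0 = 0 ∧ z 1 = 1 ∧ z 2 = 1) ∨ (z 0 = 0 ∧ z 1 = -1 ∧ z 2 = -1)) ∧
          lam 1 = lam 2)) ∨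
      ((z 0 = 1 ∧ z 1 = 0 ∧ z 2 = 0) ∨ (z 0 = -1 ∧ z 1 = 0 ∧ z 2 = 0) ∨
        (z 0 = 0 ∧ z 1 = 1 ∧ z 2 = 0) ∨ (z 0 = 0 ∧ z 1 = -1 ∧ z 2 = 0) ∨
        (z 0 = 0 ∧ z 1 = 0 ∧ z 2 = 1) ∨ (z 0 = 0 ∧ z 1 = 0 ∧ z 2 = -1))) := by
  have hU := U_Dm_eq_koszulDm hlam hUmem hUdef
  have hlam₀ : ∀ j, lam j ≠ 0 := fun j => (hlam j).ne'
  change IsNearlyKahler U z ∧ ¬IsKahler U z ↔ _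
  rw [isNearlyKahler_iff hlam₀ hU, isKahler_iff hlam₀ hU]
  exact kahlerDefect_conditions_iff hlam hz

/-- Invariant strictly nearly Kähler f-structures on the flag manifold
SU(3)/T_max: (∇_{fX} f)(fX) = 0 for all X but ∇f ≠ 0 holds exactly for
±(1,1,1) with λ₁ = λ₂ = λ₃; ±(1,1,0) with λ₁ = λ₂; ±(1,0,1) with λ₁ = λ₃;
±(0,1,1) with λ₂ = λ₃; and the rank-2 structures ±(1,0,0), ±(0,1,0),
±(0,0,1) for every metric. -/
theorem stmt_12 (z : Fin 3 → ℝ) (hz : ∀ j, z j = -1 ∨ z j = 0 ∨ z j = 1)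
    (hz0 : ¬(z 0 = 0 ∧ z 1 = 0 ∧ z 2 = 0))
    (lam : Fin 3 → ℝ) (hlam : ∀ j, 0 < lam j)
    (U : Matrix (Fin 3) (Fin 3) ℂ → Matrix (Fin 3) (Fin 3) ℂ →
      Matrix (Fin 3) (Fin 3) ℂ)
    (hUmem : ∀ X ∈ mSet, ∀ Y ∈ mSet, U X Y ∈ mSet)
    (hUsymm : ∀ X ∈ mSet, ∀ Y ∈ mSet, U X Y = U Y X)
    (hUdef : ∀ X ∈ mSet, ∀ Y ∈ mSet, ∀ Z ∈ mSet,
      2 * gmet lam (U X Y) Z =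
        gmet lam X (projm ⁅Z, Y⁆) + gmet lam (projm ⁅Z, X⁆) Y) :
    ((∀ X ∈ mSet, nablaU U z (fm z X) (fm z X) = 0) ∧
        ¬(∀ X ∈ mSet, ∀ Y ∈ mSet, nablaU U z X Y = 0)) ↔
      ((((z 0 = 1 ∧ z 1 = 1 ∧ z 2 = 1) ∨ (z 0 = -1 ∧ z 1 = -1 ∧ z 2 = -1)) ∧
          lam 0 = lam 1 ∧ lam 1 = lam 2) ∨
      ((((z 0 = 1 ∧ z 1 = 1 ∧ z 2 = 0) ∨ (z 0 = -1 ∧ z 1 = -1 ∧ z 2 = 0)) ∧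
          lam 0 = lam 1)) ∨
      ((((z 0 = 1 ∧ z 1 = 0 ∧ z 2 = 1) ∨ (z 0 = -1 ∧ z 1 = 0 ∧ z 2 = -1)) ∧
          lam 0 = lam 2)) ∨
      ((((z 0 = 0 ∧ z 1 = 1 ∧ z 2 = 1) ∨ (z 0 = 0 ∧ z 1 = -1 ∧ z 2 = -1)) ∧
          lam 1 = lam 2)) ∨
      ((z 0 = 1 ∧ z 1 = 0 ∧ z 2 = 0) ∨ (z 0 = -1 ∧ z 1 = 0 ∧ z 2 = 0) ∨
        (z 0 = 0 ∧ z 1 = 1 ∧ z 2 = 0) ∨ (z 0 = 0 ∧ z 1 = -1 ∧ z 2 = 0) ∨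
        (z 0 = 0 ∧ z 1 = 0 ∧ z 2 = 1) ∨ (z 0 = 0 ∧ z 1 = 0 ∧ z 2 = -1))) :=
  stmt_12_general z hz lam hlam U hUmem hUdef
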